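/- Let G be a group with core operation x * y = x y⁻¹ x. The core quandle Core(G) is connected (the group generated by the maps L_y : a ↦ y a⁻¹ y acts transitively on G) if and only if G is generated by its squares, i.e., G = ⟨ g² : g ∈ G ⟩. -/
import Mathlib


/-- L_y as a permutation of G: a ↦ y * a⁻¹ * y. -/
def coreL {G : Type*} [Group G] (y : G) : Equiv.Perm G :=
  ((Equiv.inv G).trans (Equiv.mulRight y)).trans (Equiv.mulLeft y)

lemma coreL_apply {G : Type*} [Group G] (y a : G) : coreL y a = y * a⁻¹ * y := by
  simp [coreL, mul_assoc]

lemma coreL_mem_sq {G : Type*} [Group G] (f : Equiv.Perm G)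
    (hf : f ∈ Subgroup.closure {e : Equiv.Perm G | ∃ y : G, e = coreL y}) (x : G) :
    f x * x⁻¹ ∈ Subgroup.closure {g : G | ∃ a : G, g = a ^ 2} := by
  induction hf using Subgroup.closure_induction generalizing x with
  | mem e he =>
      obtain ⟨y, rfl⟩ := he
      rw [coreL_apply]
      exact Subgroup.subset_closure ⟨y * x⁻¹, by rw [sq]; group⟩
  | one => simpa using one_mem _
  | mul f g hf hg ihf ihg =>
      have : (f * g) x * x⁻¹ = (f (g x) * (g x)⁻¹) * (g x * x⁻¹) := by
        simp [mul_assoc]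
      rw [this]
      exact mul_mem (ihf _) (ihg _)
  | inv f hf ih =>
      have h := ih (f⁻¹ x)
      have : f⁻¹ x * x⁻¹ = (f (f⁻¹ x) * (f⁻¹ x)⁻¹)⁻¹ := by simp
      rw [this]
      exact inv_mem h

lemma exists_coreL_word {G : Type*} [Group G] (s : G)
    (hs : s ∈ Subgroup.closure {g : G | ∃ a : G, g = a ^ 2}) (x : G) :
    ∃ f ∈ Subgroup.closure {e : Equiv.Perm G | ∃ y : G, e = coreL y}, f x = s * x := by
  induction hs using Subgroup.closure_induction generalizing x with
  | mem s hs =>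
      obtain ⟨a, rfl⟩ := hs
      refine ⟨coreL (a * x), Subgroup.subset_closure ⟨_, rfl⟩, ?_⟩
      rw [coreL_apply, sq]; group
  | one => exact ⟨1, one_mem _, by simp⟩
  | mul s t hs ht ihs iht =>
      obtain ⟨g, hg, hgx⟩ := iht x
      obtain ⟨f, hf, hfx⟩ := ihs (t * x)
      exact ⟨f * g, mul_mem hf hg, by simp [hgx, hfx, mul_assoc]⟩
  | inv s hs ih =>
      obtain ⟨f, hf, hfx⟩ := ih (s⁻¹ * x)
      refine ⟨f⁻¹, inv_mem hf, ?_⟩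
      have : f (s⁻¹ * x) = x := by rw [hfx]; group
      calc f⁻¹ x = f⁻¹ (f (s⁻¹ * x)) := by rw [this]
      _ = s⁻¹ * x := by simp

theorem core_connected_iff (G : Type*) [Group G] :
    (∀ x z : G, ∃ f ∈ Subgroup.closure {e : Equiv.Perm G | ∃ y : G, e = coreL y},
        f x = z) ↔
      Subgroup.closure {g : G | ∃ a : G, g = a ^ 2} = ⊤ := by
  constructor
  · intro h
    rw [eq_top_iff]
    intro g _
    obtain ⟨f, hf, hfx⟩ := h 1 g
    have := coreL_mem_sq f hf 1
    simpa [hfx] using this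
  · intro h x z
    have hz : z * x⁻¹ ∈ Subgroup.closure {g : G | ∃ a : G, g = a ^ 2} := by
      rw [h]; trivial
    obtain ⟨f, hf, hfx⟩ := exists_coreL_word _ hz x
    exact ⟨f, hf, by rw [hfx]; group⟩
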